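/- Let X = (X^1,...,X^L) be a random vector on a finite alphabet, and let ∅ = W_0 ⊆ W_1 ⊆ ... ⊆ W_T = [L] be a (possibly X-dependent) increasing sequence of subsets where each W_t is a measurable function of (X^{W_{t-1}}, W_{t-1}) (i.e., the set revealed at step t depends only on previously revealed coordinates). Write D_t = W_t \ W_{t-1}. Then the entropy of X decomposes as H(X) = E[ Σ_{t=1}^T H(X^{D_t} | W_{t-1}, X^{W_{t-1}}) ], where H(X^{D_t} | W_{t-1}, X^{W_{t-1}}) denotes the pointwise conditional entropy of the newly revealed block given the realized history. -/
import Mathlib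


open Finset

/-- Distribution (pmf) of a random variable `X` on a finite probability space `(Ω, μ)`. -/
noncomputable def distOf {Ω α : Type*} [Fintype Ω] [DecidableEq α]
    (μ : Ω → ℝ) (X : Ω → α) : α → ℝ :=
  fun a => ∑ ω ∈ Finset.univ.filter (fun ω => X ω = a), μ ω

/-- Kullback–Leibler divergence on a finite alphabet (convention `0 * log _ = 0`). -/
noncomputable def KLdiv {α : Type*} [Fintype α] (p q : α → ℝ) : ℝ :=
  ∑ a, p a * Real.log (p a / q a)

/-- Shannon entropy of a pmf on a finite alphabet. -/
noncomputable def entOf {α : Type*} [Fintype α] (p : α → ℝ) : ℝ :=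
  -∑ a, p a * Real.log (p a)

/-- Mutual information `I(X;Y) = KL(p_{X,Y} ‖ p_X p_Y)`. -/
noncomputable def mutInfo {Ω α β : Type*} [Fintype Ω] [Fintype α] [Fintype β]
    [DecidableEq α] [DecidableEq β]
    (μ : Ω → ℝ) (X : Ω → α) (Y : Ω → β) : ℝ :=
  KLdiv (distOf μ (fun ω => (X ω, Y ω))) (fun ab => distOf μ X ab.1 * distOf μ Y ab.2)

/-- The probability measure `μ` conditioned on the event `Z = z`. -/
noncomputable def pcond {Ω γ : Type*} [Fintype Ω] [DecidableEq γ]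
    (μ : Ω → ℝ) (Z : Ω → γ) (z : γ) : Ω → ℝ :=
  fun ω => if Z ω = z then μ ω / distOf μ Z z else 0

/-- Conditional mutual information `I(X;Y∣Z)`. -/
noncomputable def condMutInfo {Ω α β γ : Type*} [Fintype Ω] [Fintype α] [Fintype β] [Fintype γ]
    [DecidableEq α] [DecidableEq β] [DecidableEq γ]
    (μ : Ω → ℝ) (X : Ω → α) (Y : Ω → β) (Z : Ω → γ) : ℝ :=
  ∑ z, distOf μ Z z * mutInfo (pcond μ Z z) X Y

/-- Restriction of `x : Fin L → 𝕏` to a subset `S` of coordinates. -/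
def restr {L : ℕ} {𝕏 : Type*} (S : Finset (Fin L)) (x : Fin L → 𝕏) : ↥S → 𝕏 :=
  fun i => x i.1

/-- `μ` conditioned on the event that `X` agrees with `x` on the coordinate set `W`. -/
noncomputable def condOn {Ω : Type*} {L : ℕ} {𝕏 : Type*} [Fintype Ω] [Fintype 𝕏] [DecidableEq 𝕏]
    (μ : Ω → ℝ) (X : Ω → Fin L → 𝕏) (W : Finset (Fin L)) (x : Fin L → 𝕏) : Ω → ℝ :=
  pcond μ (fun ω => restr W (X ω)) (restr W x)



section AdaptiveEntropy

open Finset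

variable {Ω 𝕏 : Type*} [Fintype Ω] [Fintype 𝕏] [DecidableEq 𝕏] {L : ℕ}

private lemma restr_eq_iff' (S : Finset (Fin L)) (x y : Fin L → 𝕏) :
    restr S x = restr S y ↔ ∀ i ∈ S, x i = y i := by
  constructor
  · intro h i hi; exact congrFun h ⟨i, hi⟩
  · intro h; funext i; exact h i.1 i.2

private lemma distOf_nonneg' {α : Type*} [DecidableEq α] {μ : Ω → ℝ} (hmu0 : ∀ ω, 0 ≤ μ ω)
    (Y : Ω → α) (a : α) : 0 ≤ distOf μ Y a :=
  Finset.sum_nonneg fun ω _ => hmu0 ω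

private lemma distOf_le_distOf' {α β : Type*} [DecidableEq α] [DecidableEq β] {μ : Ω → ℝ}
    (hmu0 : ∀ ω, 0 ≤ μ ω) {Y : Ω → α} {Z : Ω → β} {a : α} {b : β}
    (h : ∀ ω, Y ω = a → Z ω = b) : distOf μ Y a ≤ distOf μ Z b :=
  Finset.sum_le_sum_of_subset_of_nonneg
    (by
      intro ω hω
      simp only [mem_filter, mem_univ, true_and] at *
      exact h ω hω)
    (fun ω _ _ => hmu0 ω)

private lemma sum_distOf_filter' {α : Type*} [Fintype α] [DecidableEq α] (ν : Ω → ℝ)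
    (Y : Ω → α) (p : α → Prop) [DecidablePred p] :
    ∑ a ∈ univ.filter p, distOf ν Y a = ∑ ω ∈ univ.filter (fun ω => p (Y ω)), ν ω := by
  unfold distOf
  rw [Finset.sum_fiberwise_eq_sum_filter univ (univ.filter p) Y ν]
  apply Finset.sum_congr
  · exact Finset.filter_congr (fun ω _ => by simp)
  · intros; rfl

/-- The masked view of `x` at time `t`. -/
private def maskF (W : ℕ → (Fin L → 𝕏) → Finset (Fin L)) (t : ℕ) (x : Fin L → 𝕏) :
    Fin L → Option 𝕏 :=
  fun i => if i ∈ W t x then some (x i) else none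

variable (W : ℕ → (Fin L → 𝕏) → Finset (Fin L))

private lemma W_consist (hW0 : ∀ x, W 0 x = ∅)
    (hmono : ∀ x t, W t x ⊆ W (t+1) x)
    (hadapt : ∀ t x x', W t x = W t x' → (∀ i ∈ W t x, x i = x' i) →
      W (t+1) x = W (t+1) x') :
    ∀ t (x x' : Fin L → 𝕏), (∀ i ∈ W t x, x i = x' i) → W t x = W t x' := by
  intro t
  induction t with
  | zero => intro x x' _; rw [hW0, hW0]
  | succ t ih =>
      intro x x' h
      have h' : ∀ i ∈ W t x, x i = x' i := fun i hi => h i (hmono x t hi)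
      exact hadapt t x x' (ih x x' h') h'

private lemma mask_eq_iff (hW0 : ∀ x, W 0 x = ∅)
    (hmono : ∀ x t, W t x ⊆ W (t+1) x)
    (hadapt : ∀ t x x', W t x = W t x' → (∀ i ∈ W t x, x i = x' i) →
      W (t+1) x = W (t+1) x') (t : ℕ) (x y : Fin L → 𝕏) :
    maskF W t x = maskF W t y ↔ ∀ i ∈ W t x, x i = y i := by
  constructor
  · intro h i hi
    have hc := congrFun h i
    simp only [maskF, if_pos hi] at hc
    by_cases hy : i ∈ W t y
    · rw [if_pos hy] at hc; exact Option.some_injective _ hc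
    · rw [if_neg hy] at hc; exact absurd hc (by simp)
  · intro h
    have hw : W t x = W t y := W_consist W hW0 hmono hadapt t x y h
    funext i
    by_cases hi : i ∈ W t x
    · simp only [maskF, if_pos hi, if_pos (hw ▸ hi), h i hi]
    · simp only [maskF, if_neg hi, if_neg (hw ▸ hi)]

private lemma step_lemma
    (μ : Ω → ℝ) (hmu0 : ∀ ω, 0 ≤ μ ω)
    (X : Ω → Fin L → 𝕏)
    (hW0 : ∀ x, W 0 x = ∅)
    (hmono : ∀ x t, W t x ⊆ W (t+1) x)
    (hadapt : ∀ t x x', W t x = W t x' → (∀ i ∈ W t x, x i = x' i) →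
      W (t+1) x = W (t+1) x') (t : ℕ) :
    ∑ x, distOf μ X x *
        entOf (distOf (condOn μ X (W t x) x) (fun ω => restr (W (t+1) x \ W t x) (X ω)))
      = ∑ x, distOf μ X x *
        (Real.log (distOf μ (fun ω => restr (W t x) (X ω)) (restr (W t x) x))
          - Real.log (distOf μ (fun ω => restr (W (t+1) x) (X ω)) (restr (W (t+1) x) x))) := by
  rw [← Finset.sum_fiberwise Finset.univ (maskF W t)
      (fun x => distOf μ X x *
        entOf (distOf (condOn μ X (W t x) x) (fun ω => restr (W (t+1) x \ W t x) (X ω)))),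
    ← Finset.sum_fiberwise Finset.univ (maskF W t)
      (fun x => distOf μ X x *
        (Real.log (distOf μ (fun ω => restr (W t x) (X ω)) (restr (W t x) x))
          - Real.log (distOf μ (fun ω => restr (W (t+1) x) (X ω)) (restr (W (t+1) x) x))))]
  refine Finset.sum_congr rfl fun m _ => ?_
  rcases Finset.eq_empty_or_nonempty (univ.filter (fun x => maskF W t x = m)) with hemp | ⟨x₀, hx₀⟩
  · rw [hemp]; simp
  · have hx₀m : maskF W t x₀ = m := (Finset.mem_filter.mp hx₀).2
    -- characterization of the fiber
    have hmemb : ∀ y : Fin L → 𝕏, maskF W t y = m ↔ restr (W t x₀) y = restr (W t x₀) x₀ := by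
      intro y
      rw [← hx₀m]
      constructor
      · intro h
        rw [restr_eq_iff']
        intro i hi
        exact ((mask_eq_iff W hW0 hmono hadapt t x₀ y).mp h.symm i hi).symm
      · intro h
        refine ((mask_eq_iff W hW0 hmono hadapt t x₀ y).mpr ?_).symm
        intro i hi
        exact ((restr_eq_iff' _ _ _).mp h i hi).symm
    -- facts about members of the fiber
    have hWx : ∀ x ∈ univ.filter (fun y => maskF W t y = m), W t x = W t x₀ := by
      intro x hx
      refine W_consist W hW0 hmono hadapt t x x₀ ?_
      have := (hmemb x).mp (Finset.mem_filter.mp hx).2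
      have hag := (restr_eq_iff' _ _ _).mp this
      intro i hi
      by_contra hne
      -- need agreement on W t x, but we only know on W t x₀; use symmetry
      exact hne (by
        have hw : W t x₀ = W t x :=
          W_consist W hW0 hmono hadapt t x₀ x (fun j hj => (hag j hj).symm)
        exact hag i (hw ▸ hi))
    have hrestr : ∀ x ∈ univ.filter (fun y => maskF W t y = m),
        restr (W t x₀) x = restr (W t x₀) x₀ := by
      intro x hx
      exact (hmemb x).mp (Finset.mem_filter.mp hx).2
    have hVx : ∀ x ∈ univ.filter (fun y => maskF W t y = m), W (t+1) x = W (t+1) x₀ := by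
      intro x hx
      refine hadapt t x x₀ (hWx x hx) ?_
      intro i hi
      exact (restr_eq_iff' _ _ _).mp (hrestr x hx) i ((hWx x hx) ▸ hi)
    -- notation
    set WW := W t x₀ with hWWdef
    set V := W (t+1) x₀ with hVdef
    set D := V \ WW with hDdef
    set q : ℝ := distOf μ (fun ω => restr WW (X ω)) (restr WW x₀) with hqdef
    set ν : Ω → ℝ := condOn μ X WW x₀ with hνdef
    set r : (↥D → 𝕏) → ℝ := distOf ν (fun ω => restr D (X ω)) with hrdef
    have hWWV : WW ⊆ V := hmono x₀ t
    -- the canonical events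
    have hqr : ∀ d : ↥D → 𝕏,
        q * r d = ∑ ω ∈ univ.filter
          (fun ω => restr D (X ω) = d ∧ restr WW (X ω) = restr WW x₀), μ ω := by
      intro d
      by_cases hq : q = 0
      · rw [hq, zero_mul]
        symm
        have h1 : (0:ℝ) ≤ ∑ ω ∈ univ.filter
            (fun ω => restr D (X ω) = d ∧ restr WW (X ω) = restr WW x₀), μ ω :=
          Finset.sum_nonneg fun ω _ => hmu0 ω
        have h2 : ∑ ω ∈ univ.filter
            (fun ω => restr D (X ω) = d ∧ restr WW (X ω) = restr WW x₀), μ ω ≤ q := by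
          refine Finset.sum_le_sum_of_subset_of_nonneg ?_ (fun ω _ _ => hmu0 ω)
          intro ω hω
          simp only [Finset.mem_filter, Finset.mem_univ, true_and] at *
          exact hω.2
        exact le_antisymm (h2.trans_eq hq) h1
      · rw [hrdef]
        show q * ∑ ω ∈ univ.filter (fun ω => restr D (X ω) = d), ν ω = _
        rw [Finset.mul_sum]
        have hterm : ∀ ω ∈ univ.filter (fun ω => restr D (X ω) = d),
            q * ν ω = if restr WW (X ω) = restr WW x₀ then μ ω else 0 := by
          intro ω _
          simp only [hνdef, condOn, pcond, ← hqdef]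
          split_ifs with hc
          · exact mul_div_cancel₀ (μ ω) hq
          · exact mul_zero q
        rw [Finset.sum_congr rfl hterm, ← Finset.sum_filter, Finset.filter_filter]
    -- left side of the fiber identity
    have hA : ∑ x ∈ univ.filter (fun y => maskF W t y = m), distOf μ X x = q := by
      rw [sum_distOf_filter' μ X (fun y => maskF W t y = m)]
      rw [hqdef]
      show _ = ∑ ω ∈ univ.filter (fun ω => restr WW (X ω) = restr WW x₀), μ ω
      refine Finset.sum_congr (Finset.filter_congr fun ω _ => ?_) fun _ _ => rfl
      simp only [hmemb (X ω)]
    have hL : ∑ x ∈ univ.filter (fun y => maskF W t y = m),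
        distOf μ X x *
          entOf (distOf (condOn μ X (W t x) x) (fun ω => restr (W (t+1) x \ W t x) (X ω)))
        = q * entOf r := by
      rw [← hA, Finset.sum_mul]
      refine Finset.sum_congr rfl fun x hx => ?_
      congr 1
      have h1 := hWx x hx
      have h2 := hVx x hx
      rw [h1, h2, ← hDdef]
      have : condOn μ X WW x = ν := by
        rw [hνdef]
        unfold condOn
        rw [hrestr x hx]
      rw [this, ← hrdef]
    rw [hL]
    -- right side: first rewrite each term
    have hB : ∀ x ∈ univ.filter (fun y => maskF W t y = m),
        distOf μ (fun ω => restr (W (t+1) x) (X ω)) (restr (W (t+1) x) x)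
          = q * r (restr D x) := by
      intro x hx
      rw [hqr (restr D x), hVx x hx]
      refine Finset.sum_congr (Finset.filter_congr fun ω _ => ?_) fun _ _ => rfl
      have hag : ∀ i ∈ WW, x i = x₀ i := (restr_eq_iff' _ _ _).mp (hrestr x hx)
      constructor
      · intro h
        have h' := (restr_eq_iff' _ _ _).mp h
        constructor
        · rw [restr_eq_iff']
          intro i hi
          exact h' i (Finset.sdiff_subset hi)
        · rw [restr_eq_iff']
          intro i hi
          exact (h' i (hWWV hi)).trans (hag i hi)
      · rintro ⟨h1, h2⟩
        rw [restr_eq_iff']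
        intro i hi
        by_cases hiW : i ∈ WW
        · exact ((restr_eq_iff' _ _ _).mp h2 i hiW).trans (hag i hiW).symm
        · exact (restr_eq_iff' _ _ _).mp h1 i (Finset.mem_sdiff.mpr ⟨hi, hiW⟩)
    have hqt : ∀ x ∈ univ.filter (fun y => maskF W t y = m),
        distOf μ (fun ω => restr (W t x) (X ω)) (restr (W t x) x) = q := by
      intro x hx
      rw [hWx x hx, hqdef]
      congr 1
      exact hrestr x hx
    have hR1 : ∑ x ∈ univ.filter (fun y => maskF W t y = m),
        distOf μ X x *
          (Real.log (distOf μ (fun ω => restr (W t x) (X ω)) (restr (W t x) x))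
            - Real.log (distOf μ (fun ω => restr (W (t+1) x) (X ω)) (restr (W (t+1) x) x)))
        = ∑ x ∈ univ.filter (fun y => maskF W t y = m),
            distOf μ X x * (-Real.log (r (restr D x))) := by
      refine Finset.sum_congr rfl fun x hx => ?_
      rcases eq_or_lt_of_le (distOf_nonneg' hmu0 X x) with hp0 | hp
      · rw [← hp0, zero_mul, zero_mul]
      · have hple : distOf μ X x ≤ q := by
          rw [← hqt x hx]
          refine distOf_le_distOf' hmu0 fun ω hω => ?_
          rw [hω]
        have hqpos : 0 < q := lt_of_lt_of_le hp hple
        have hple2 : distOf μ X x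
            ≤ distOf μ (fun ω => restr (W (t+1) x) (X ω)) (restr (W (t+1) x) x) := by
          refine distOf_le_distOf' hmu0 fun ω hω => ?_
          rw [hω]
        have hqrpos : 0 < q * r (restr D x) := by
          rw [← hB x hx]; exact lt_of_lt_of_le hp hple2
        have hrpos : 0 < r (restr D x) := by
          by_contra hle
          push_neg at hle
          nlinarith
        rw [hqt x hx, hB x hx, Real.log_mul (ne_of_gt hqpos) (ne_of_gt hrpos)]
        ring
    rw [hR1]
    -- now fiber over restr D
    rw [← Finset.sum_fiberwise (univ.filter (fun y => maskF W t y = m)) (fun x => restr D x)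
        (fun x => distOf μ X x * (-Real.log (r (restr D x))))]
    have hC : ∀ d : ↥D → 𝕏,
        ∑ x ∈ (univ.filter (fun y => maskF W t y = m)).filter (fun x => restr D x = d),
          distOf μ X x = q * r d := by
      intro d
      rw [Finset.filter_filter, hqr d]
      rw [sum_distOf_filter' μ X (fun y => maskF W t y = m ∧ restr D y = d)]
      refine Finset.sum_congr (Finset.filter_congr fun ω _ => ?_) fun _ _ => rfl
      rw [hmemb (X ω)]
      exact ⟨fun h => ⟨h.2, h.1⟩, fun h => ⟨h.2, h.1⟩⟩
    have hstep : ∀ d : ↥D → 𝕏,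
        ∑ x ∈ (univ.filter (fun y => maskF W t y = m)).filter (fun x => restr D x = d),
          distOf μ X x * (-Real.log (r (restr D x)))
        = q * (r d * (-Real.log (r d))) := by
      intro d
      have : ∀ x ∈ (univ.filter (fun y => maskF W t y = m)).filter (fun x => restr D x = d),
          distOf μ X x * (-Real.log (r (restr D x)))
            = distOf μ X x * (-Real.log (r d)) := by
        intro x hx
        rw [(Finset.mem_filter.mp hx).2]
      rw [Finset.sum_congr rfl this, ← Finset.sum_mul, hC d]
      ring
    rw [Finset.sum_congr rfl fun d _ => hstep d, ← Finset.mul_sum]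
    congr 1
    rw [entOf]
    rw [← Finset.sum_neg_distrib]
    refine Finset.sum_congr rfl fun d _ => ?_
    ring

end AdaptiveEntropy


/-- Adaptive entropy decomposition: the entropy of `X` equals the expected sum, along the
adaptive unmasking trajectory, of the pointwise conditional entropies of the newly revealed
blocks given the realized history. -/
theorem entropy_eq_expected_sum_block_condEnt
    {Ω 𝕏 : Type*} [Fintype Ω] [Fintype 𝕏] [DecidableEq 𝕏] (L : ℕ)
    (μ : Ω → ℝ) (hmu0 : ∀ ω, 0 ≤ μ ω) (hmu1 : ∑ ω, μ ω = 1)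
    (X : Ω → Fin L → 𝕏)
    (W : ℕ → (Fin L → 𝕏) → Finset (Fin L)) (T : (Fin L → 𝕏) → ℕ)
    (hW0 : ∀ x, W 0 x = ∅)
    (hmono : ∀ x t, W t x ⊆ W (t+1) x)
    (hfull : ∀ x, W (T x) x = Finset.univ)
    (hadapt : ∀ t x x', W t x = W t x' → (∀ i ∈ W t x, x i = x' i) →
      W (t+1) x = W (t+1) x') :
    entOf (distOf μ X) =
      ∑ x, distOf μ X x * ∑ t ∈ Finset.range (T x),
        entOf (distOf (condOn μ X (W t x) x)
          (fun ω => restr (W (t+1) x \ W t x) (X ω))) := by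
  classical
  set N := Finset.univ.sup T with hN
  have hTN : ∀ x : Fin L → 𝕏, T x ≤ N := fun x => Finset.le_sup (Finset.mem_univ x)
  have hWmono : ∀ (x : Fin L → 𝕏) (s u : ℕ), s ≤ u → W s x ⊆ W u x := by
    intro x s u hsu
    induction hsu with
    | refl => exact Finset.Subset.refl _
    | step _ ih => exact ih.trans (hmono x _)
  have hWuniv : ∀ (x : Fin L → 𝕏) (u : ℕ), T x ≤ u → W u x = Finset.univ := by
    intro x u h
    have h2 := hWmono x (T x) u h
    rw [hfull x] at h2
    exact Finset.univ_subset_iff.mp h2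
  have hq0 : ∀ y : Fin L → 𝕏,
      distOf μ (fun ω => restr (∅ : Finset (Fin L)) (X ω)) (restr ∅ y) = 1 := by
    intro y
    unfold distOf
    rw [Finset.filter_true_of_mem, hmu1]
    intro ω _
    funext i
    exact absurd i.2 (Finset.notMem_empty i.1)
  have hqU : ∀ y : Fin L → 𝕏,
      distOf μ (fun ω => restr (Finset.univ : Finset (Fin L)) (X ω)) (restr Finset.univ y)
        = distOf μ X y := by
    intro y
    unfold distOf
    refine Finset.sum_congr (Finset.filter_congr fun ω _ => ?_) fun _ _ => rfl
    show restr Finset.univ (X ω) = restr Finset.univ y ↔ X ω = y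
    constructor
    · intro h; funext i; exact congrFun h ⟨i, Finset.mem_univ i⟩
    · intro h; rw [h]
  have hHzero : ∀ x : Fin L → 𝕏, distOf μ X x ≠ 0 → ∀ u : ℕ, T x ≤ u →
      entOf (distOf (condOn μ X (W u x) x)
        (fun ω => restr (W (u+1) x \ W u x) (X ω))) = 0 := by
    intro x hp u hu
    have h1 : W u x = Finset.univ := hWuniv x u hu
    have h2 : W (u+1) x = Finset.univ := hWuniv x (u+1) (hu.trans (Nat.le_succ u))
    rw [h1, h2, Finset.sdiff_self]
    have hmass : ∀ a : (↥(∅ : Finset (Fin L)) → 𝕏),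
        distOf (condOn μ X Finset.univ x)
          (fun ω => restr (∅ : Finset (Fin L)) (X ω)) a = 1 := by
      intro a
      unfold distOf
      have hall : ∀ ω ∈ (Finset.univ : Finset Ω),
          restr (∅ : Finset (Fin L)) (X ω) = a := by
        intro ω _
        funext i
        exact absurd i.2 (Finset.notMem_empty i.1)
      rw [Finset.filter_true_of_mem hall]
      unfold condOn pcond
      rw [← Finset.sum_filter, ← Finset.sum_div]
      have hnum : ∑ ω ∈ Finset.univ.filter
            (fun ω => restr (Finset.univ : Finset (Fin L)) (X ω) = restr Finset.univ x), μ ω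
          = distOf μ (fun ω => restr (Finset.univ : Finset (Fin L)) (X ω))
              (restr Finset.univ x) := rfl
      rw [hnum, hqU x, div_self hp]
    unfold entOf
    have hz : ∑ a, distOf (condOn μ X Finset.univ x)
          (fun ω => restr (∅ : Finset (Fin L)) (X ω)) a *
        Real.log (distOf (condOn μ X Finset.univ x)
          (fun ω => restr (∅ : Finset (Fin L)) (X ω)) a) = 0 := by
      refine Finset.sum_eq_zero fun a _ => ?_
      rw [hmass a]
      simp
    rw [hz, neg_zero]
  have hce : ∀ x : Fin L → 𝕏, distOf μ X x ≠ 0 →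
      ∑ u ∈ Finset.range N,
        (Real.log (distOf μ (fun ω => restr (W u x) (X ω)) (restr (W u x) x))
          - Real.log (distOf μ (fun ω => restr (W (u+1) x) (X ω)) (restr (W (u+1) x) x)))
        = - Real.log (distOf μ X x) := by
    intro x hp
    rw [Finset.sum_range_sub'
      (fun u => Real.log (distOf μ (fun ω => restr (W u x) (X ω)) (restr (W u x) x))) N]
    rw [hW0 x, hq0 x, hWuniv x N (hTN x), hqU x, Real.log_one, zero_sub]
  calc entOf (distOf μ X)
      = ∑ x, distOf μ X x * (- Real.log (distOf μ X x)) := by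
        unfold entOf
        rw [← Finset.sum_neg_distrib]
        exact Finset.sum_congr rfl fun x _ => by ring
    _ = ∑ x, distOf μ X x * ∑ u ∈ Finset.range N,
          (Real.log (distOf μ (fun ω => restr (W u x) (X ω)) (restr (W u x) x))
            - Real.log (distOf μ (fun ω => restr (W (u+1) x) (X ω)) (restr (W (u+1) x) x))) := by
        refine Finset.sum_congr rfl fun x _ => ?_
        by_cases hp : distOf μ X x = 0
        · rw [hp, zero_mul, zero_mul]
        · rw [hce x hp]
    _ = ∑ u ∈ Finset.range N, ∑ x, distOf μ X x *
          (Real.log (distOf μ (fun ω => restr (W u x) (X ω)) (restr (W u x) x))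
            - Real.log (distOf μ (fun ω => restr (W (u+1) x) (X ω)) (restr (W (u+1) x) x))) := by
        simp_rw [Finset.mul_sum]
        rw [Finset.sum_comm]
    _ = ∑ u ∈ Finset.range N, ∑ x, distOf μ X x *
          entOf (distOf (condOn μ X (W u x) x)
            (fun ω => restr (W (u+1) x \ W u x) (X ω))) := by
        refine Finset.sum_congr rfl fun u _ => ?_
        exact (step_lemma W μ hmu0 X hW0 hmono hadapt u).symm
    _ = ∑ x, distOf μ X x * ∑ u ∈ Finset.range N,
          entOf (distOf (condOn μ X (W u x) x)
            (fun ω => restr (W (u+1) x \ W u x) (X ω))) := by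
        rw [Finset.sum_comm]
        simp_rw [Finset.mul_sum]
    _ = ∑ x, distOf μ X x * ∑ t ∈ Finset.range (T x),
          entOf (distOf (condOn μ X (W t x) x)
            (fun ω => restr (W (t+1) x \ W t x) (X ω))) := by
        refine Finset.sum_congr rfl fun x _ => ?_
        by_cases hp : distOf μ X x = 0
        · rw [hp, zero_mul, zero_mul]
        · congr 1
          refine (Finset.sum_subset (Finset.range_subset_range.mpr (hTN x)) ?_).symm
          intro u _ hnot
          exact hHzero x hp u (by simpa using hnot)
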